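/- (Principal Fitted Components sufficiency, Corollary with only continuous predictors.) Let p_y(x) := (2π)^{−p/2} (det Δ)^{−1/2} exp(−½ (x − μ_X − A f_y)ᵀ Δ⁻¹ (x − μ_X − A f_y)) for x ∈ ℝ^p and y ∈ 𝒴. If x₁, x₂ ∈ ℝ^p satisfy (Δ⁻¹A)ᵀ x₁ = (Δ⁻¹A)ᵀ x₂, then p_y(x₁) · p_{y'}(x₂) = p_y(x₂) · p_{y'}(x₁) for all y, y' ∈ 𝒴; that is, the Gaussian likelihood ratio between any two values of y depends on x only through the reduction (Δ⁻¹A)ᵀx. -/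
import Mathlib


open Matrix

namespace Stmt4

/-- Density of the multivariate normal `N(μ_X + A f_y, Δ)` on `ℝ^p`:
`p_y(x) = (2π)^{-p/2} (det Δ)^{-1/2} exp(-½ (x-μ_X-A f_y)ᵀ Δ⁻¹ (x-μ_X-A f_y))`. -/
noncomputable def pdens {p r : ℕ} (μX : Fin p → ℝ) (A : Matrix (Fin p) (Fin r) ℝ)
    (Δ : Matrix (Fin p) (Fin p) ℝ) (fy : Fin r → ℝ) (x : Fin p → ℝ) : ℝ :=
  (2 * Real.pi) ^ (-(p : ℝ) / 2) * Δ.det ^ (-(1 : ℝ) / 2) *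
    Real.exp (-(1/2 : ℝ) * ((x - μX - A *ᵥ fy) ⬝ᵥ (Δ⁻¹ *ᵥ (x - μX - A *ᵥ fy))))

/-- Principal Fitted Components sufficiency. If
`(Δ⁻¹A)ᵀ x₁ = (Δ⁻¹A)ᵀ x₂` then the Gaussian likelihood ratio between any two values
of `y` depends on `x` only through the reduction `(Δ⁻¹A)ᵀ x`:
`p_y(x₁)·p_{y'}(x₂) = p_y(x₂)·p_{y'}(x₁)`. -/
theorem statement4 {p r : ℕ} {𝒴 : Type*}
    (μX : Fin p → ℝ) (A : Matrix (Fin p) (Fin r) ℝ)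
    (Δ : Matrix (Fin p) (Fin p) ℝ) (hΔ : Δ.PosDef)
    (f : 𝒴 → Fin r → ℝ) (x₁ x₂ : Fin p → ℝ)
    (hred : (Δ⁻¹ * A)ᵀ *ᵥ x₁ = (Δ⁻¹ * A)ᵀ *ᵥ x₂) :
    ∀ y y' : 𝒴,
      pdens μX A Δ (f y) x₁ * pdens μX A Δ (f y') x₂
        = pdens μX A Δ (f y) x₂ * pdens μX A Δ (f y') x₁ := by
  intro y y'
  set B := Δ⁻¹ with hB
  have hBsymm : Bᵀ = B := by simpa [Matrix.IsHermitian] using hΔ.isHermitian.inv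
  have hAt : Aᵀ *ᵥ (B *ᵥ (x₁ - x₂)) = 0 := by
    have h : (B * A)ᵀ *ᵥ (x₁ - x₂) = 0 := by
      rw [Matrix.mulVec_sub, hred, sub_self]
    rw [Matrix.transpose_mul, hBsymm, ← Matrix.mulVec_mulVec] at h
    exact h
  have hz2 : ∀ v : Fin r → ℝ, (A *ᵥ v) ⬝ᵥ (B *ᵥ (x₁ - x₂)) = 0 := by
    intro v
    rw [← Matrix.vecMul_transpose, ← Matrix.dotProduct_mulVec, hAt, dotProduct_zero]
  have hz1 : ∀ v : Fin r → ℝ, (x₁ - x₂) ⬝ᵥ (B *ᵥ (A *ᵥ v)) = 0 := by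
    intro v
    rw [Matrix.dotProduct_mulVec, ← Matrix.mulVec_transpose, hBsymm, dotProduct_comm]
    exact hz2 v
  have key : ∀ v v' : Fin r → ℝ,
      ((x₁ - μX - A *ᵥ v) ⬝ᵥ (B *ᵥ (x₁ - μX - A *ᵥ v)))
        + ((x₂ - μX - A *ᵥ v') ⬝ᵥ (B *ᵥ (x₂ - μX - A *ᵥ v')))
      = ((x₂ - μX - A *ᵥ v) ⬝ᵥ (B *ᵥ (x₂ - μX - A *ᵥ v)))
        + ((x₁ - μX - A *ᵥ v') ⬝ᵥ (B *ᵥ (x₁ - μX - A *ᵥ v'))) := by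
    intro v v'
    have e1 := hz1 v
    have e2 := hz2 v
    have e3 := hz1 v'
    have e4 := hz2 v'
    simp only [Matrix.mulVec_sub, sub_dotProduct, dotProduct_sub] at *
    linarith
  unfold pdens
  rw [← hB]
  set K := (2 * Real.pi) ^ (-(p : ℝ) / 2) * Δ.det ^ (-(1 : ℝ) / 2) with hK
  have h : Real.exp (-(1/2 : ℝ) * ((x₁ - μX - A *ᵥ f y) ⬝ᵥ (B *ᵥ (x₁ - μX - A *ᵥ f y))))
        * Real.exp (-(1/2 : ℝ) * ((x₂ - μX - A *ᵥ f y') ⬝ᵥ (B *ᵥ (x₂ - μX - A *ᵥ f y'))))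
      = Real.exp (-(1/2 : ℝ) * ((x₂ - μX - A *ᵥ f y) ⬝ᵥ (B *ᵥ (x₂ - μX - A *ᵥ f y))))
        * Real.exp (-(1/2 : ℝ) * ((x₁ - μX - A *ᵥ f y') ⬝ᵥ (B *ᵥ (x₁ - μX - A *ᵥ f y')))) := by
    rw [← Real.exp_add, ← Real.exp_add]
    congr 1
    have := key (f y) (f y')
    linarith
  calc K * Real.exp (-(1/2 : ℝ) * ((x₁ - μX - A *ᵥ f y) ⬝ᵥ (B *ᵥ (x₁ - μX - A *ᵥ f y))))
        * (K * Real.exp (-(1/2 : ℝ) * ((x₂ - μX - A *ᵥ f y') ⬝ᵥ (B *ᵥ (x₂ - μX - A *ᵥ f y')))))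
      = K * K * (Real.exp (-(1/2 : ℝ) * ((x₁ - μX - A *ᵥ f y) ⬝ᵥ (B *ᵥ (x₁ - μX - A *ᵥ f y))))
        * Real.exp (-(1/2 : ℝ) * ((x₂ - μX - A *ᵥ f y') ⬝ᵥ (B *ᵥ (x₂ - μX - A *ᵥ f y'))))) := by ring
    _ = K * K * (Real.exp (-(1/2 : ℝ) * ((x₂ - μX - A *ᵥ f y) ⬝ᵥ (B *ᵥ (x₂ - μX - A *ᵥ f y))))
        * Real.exp (-(1/2 : ℝ) * ((x₁ - μX - A *ᵥ f y') ⬝ᵥ (B *ᵥ (x₁ - μX - A *ᵥ f y'))))) := by rw [h]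
    _ = _ := by ring

end Stmt4
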